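/- Let Γ be a group generated by two elements α, β, and suppose there is a surjective group homomorphism φ: Γ → ℤ ∗ ℤ/5ℤ with φ(α) = a (the generator of the factor ℤ) and φ(α·β) = b (the generator of the factor ℤ/5ℤ), such that the kernel of φ is the cyclic subgroup generated by (α·β)^5, the element (α·β)^5 is central in Γ, and (α·β)^5 has infinite order. Then the homomorphism from the presented group A = ⟨x, y | (xy)^5 = (yx)^5⟩ to Γ sending x ↦ α and y ↦ β is a group isomorphism; in particular Γ is generated by α, β subject to the single relation (αβ)^5 = (βα)^5. -/

import Mathlib

/-- The single defining relator `(xy)^5·((yx)^5)⁻¹` of the dihedral-type Artin group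
`A = ⟨x, y ∣ (xy)^5 = (yx)^5⟩`, where `x`, `y` are the two generators of the free group. -/
def artinRelator : Set (FreeGroup (Fin 2)) :=
  {(FreeGroup.of 0 * FreeGroup.of 1) ^ 5 * ((FreeGroup.of 1 * FreeGroup.of 0) ^ 5)⁻¹}

/-!
Put `z = (xy)^5` in `A`. The relation makes `z` central, and in `A/⟨z⟩` the image of `xy` has
order dividing 5, so `a ↦ x`, `b ↦ xy` defines a homomorphism `σ : ℤ ∗ ℤ/5 → A/⟨z⟩`. Since
`σ ∘ φ ∘ ψ` is the quotient map on the generators, `ker ψ ⊆ ⟨z⟩`; as `ψ z = (αβ)^5` has infinite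
order, `ψ` is injective. It is surjective because `α, β` generate `Γ`.
-/

theorem Subgroup.normal_of_le_center {G : Type*} [Group G] {H : Subgroup G}
    (hH : H ≤ center G) : H.Normal where
  conj_mem n hn g := by
    rwa [(mem_center_iff.mp (hH hn) g), mul_inv_cancel_right]

theorem MonoidHom.injective_of_ker_le_zpowers {G H : Type*} [Group G] [Group H] (f : G →* H)
    {z : G} (hker : f.ker ≤ Subgroup.zpowers z) (hz : ¬IsOfFinOrder (f z)) :
    Function.Injective f := by
  refine (injective_iff_map_eq_one f).mpr fun g hg ↦ ?_
  obtain ⟨k, rfl⟩ := Subgroup.mem_zpowers_iff.mp (hker hg)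
  have hk : k = 0 := by
    by_contra hk
    exact hz (isOfFinOrder_iff_zpow_eq_one.mpr ⟨k, hk, by rwa [← map_zpow]⟩)
  rw [hk, zpow_zero]

theorem commute_mul_pow_of_mul_pow_eq {G : Type*} [Monoid G] {a b : G} {n : ℕ}
    (h : (a * b) ^ n = (b * a) ^ n) : Commute a ((a * b) ^ n) ∧ Commute b ((a * b) ^ n) :=
  ⟨by rw [Commute, SemiconjBy, mul_pow_mul, ← h],
    by rw [Commute, SemiconjBy, h, mul_pow_mul, h]⟩

def zmodPowersHom {G : Type*} [Group G] (n : ℕ) (v : G) (hv : v ^ n = 1) :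
    Multiplicative (ZMod n) →* G :=
  AddMonoidHom.toMultiplicativeLeft <|
    ZMod.lift n ⟨zmultiplesHom (Additive G) (Additive.ofMul v), by
      rw [zmultiplesHom_apply, natCast_zsmul, ← ofMul_pow, hv, ofMul_one]⟩

@[simp]
theorem zmodPowersHom_ofAdd_one {G : Type*} [Group G] (n : ℕ) (v : G) (hv : v ^ n = 1) :
    zmodPowersHom n v hv (Multiplicative.ofAdd 1) = v := by
  rw [zmodPowersHom, AddMonoidHom.toMultiplicativeLeft_apply_apply, toAdd_ofAdd,
    ← Int.cast_one, ZMod.lift_coe]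
  simp

def coprodZModLift {G : Type*} [Group G] (n : ℕ) (u v : G) (hv : v ^ n = 1) :
    Monoid.Coprod (Multiplicative ℤ) (Multiplicative (ZMod n)) →* G :=
  Monoid.Coprod.lift (zpowersHom G u) (zmodPowersHom n v hv)

open PresentedGroup in
theorem artinGroup_mul_pow_five :
    ((of 0 * of 1) ^ 5 : PresentedGroup artinRelator) = (of 1 * of 0) ^ 5 := by
  have h : mk artinRelator ((FreeGroup.of 0 * FreeGroup.of 1) ^ 5 *
      ((FreeGroup.of 1 * FreeGroup.of 0) ^ 5)⁻¹) = 1 :=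
    (QuotientGroup.eq_one_iff _).mpr (Subgroup.subset_normalClosure rfl)
  rwa [map_mul, map_inv, map_pow, map_pow, map_mul, map_mul, mul_inv_eq_one] at h

open PresentedGroup in
theorem artinGroup_mul_pow_five_mem_center :
    ((of 0 * of 1) ^ 5 : PresentedGroup artinRelator) ∈ Subgroup.center _ := by
  obtain ⟨hx, hy⟩ := commute_mul_pow_of_mul_pow_eq artinGroup_mul_pow_five
  rw [Subgroup.center_eq_iInf (closure_range_of artinRelator)]
  simp only [Subgroup.mem_iInf, Subgroup.mem_centralizer_singleton_iff, Set.forall_mem_range]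
  intro i
  fin_cases i
  exacts [hx.eq.symm, hy.eq.symm]

open PresentedGroup in
theorem artinGroup_ker_le_zpowers
    (π : PresentedGroup artinRelator →* Monoid.Coprod (Multiplicative ℤ) (Multiplicative (ZMod 5)))
    (hx : π (of 0) = Monoid.Coprod.inl (Multiplicative.ofAdd 1))
    (hxy : π (of 0 * of 1) = Monoid.Coprod.inr (Multiplicative.ofAdd 1)) :
    π.ker ≤ Subgroup.zpowers ((of 0 * of 1) ^ 5) := by
  set N := Subgroup.zpowers ((of 0 * of 1) ^ 5 : PresentedGroup artinRelator)
  have : N.Normal := Subgroup.normal_of_le_center <|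
    Subgroup.zpowers_le.mpr artinGroup_mul_pow_five_mem_center
  let q := QuotientGroup.mk' N
  have hq : q (of 0 * of 1) ^ 5 = 1 := by
    rw [← map_pow, QuotientGroup.mk'_apply, QuotientGroup.eq_one_iff]
    exact Subgroup.mem_zpowers _
  let σ := coprodZModLift 5 (q (of 0)) (q (of 0 * of 1)) hq
  have hy : π (of 1) = (Monoid.Coprod.inl (Multiplicative.ofAdd 1))⁻¹ *
      Monoid.Coprod.inr (Multiplicative.ofAdd 1) := by
    rw [← hx, ← hxy, map_mul, inv_mul_cancel_left]
  have hσπ : σ.comp π = q := by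
    ext i
    fin_cases i
    · simp [σ, coprodZModLift, hx]
    · simp [σ, coprodZModLift, hy]
  calc π.ker ≤ (σ.comp π).ker := π.ker_le_comap σ.ker
    _ = N := by rw [hσπ, QuotientGroup.ker_mk']

theorem artin_group_of_autoequivalences_general
    {Γ : Type*} [Group Γ] (α β : Γ)
    (hgen : Subgroup.closure ({α, β} : Set Γ) = ⊤)
    (φ : Γ →* Monoid.Coprod (Multiplicative ℤ) (Multiplicative (ZMod 5)))
    (hα : φ α = Monoid.Coprod.inl (Multiplicative.ofAdd (1 : ℤ)))
    (hαβ : φ (α * β) = Monoid.Coprod.inr (Multiplicative.ofAdd (1 : ZMod 5)))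
    (hinf : ¬ IsOfFinOrder ((α * β) ^ 5)) :
    ∀ ψ : PresentedGroup artinRelator →* Γ,
      ψ (PresentedGroup.of 0) = α → ψ (PresentedGroup.of 1) = β →
      Function.Bijective ψ := by
  intro ψ hx hy
  have hker : ψ.ker ≤ Subgroup.zpowers ((PresentedGroup.of 0 * PresentedGroup.of 1) ^ 5) :=
    (ψ.ker_le_comap φ.ker).trans <|
      artinGroup_ker_le_zpowers (φ.comp ψ) (by simp [hx, hα]) (by simp [hx, hy, hαβ])
  refine ⟨ψ.injective_of_ker_le_zpowers hker (by simpa [hx, hy] using hinf), ?_⟩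
  rw [← MonoidHom.range_eq_top, eq_top_iff, ← hgen, Subgroup.closure_le]
  rintro g (rfl | rfl)
  exacts [⟨_, hx⟩, ⟨_, hy⟩]

/-- Let `Γ` be a group generated by two elements `α, β` admitting a
surjection `φ` onto `ℤ ∗ ℤ/5ℤ` with `φ(α) = a` (the generator of `ℤ`), `φ(α·β) = b` (the
generator of `ℤ/5ℤ`), whose kernel is the cyclic subgroup generated by `(α·β)^5`, where
`(α·β)^5` is central in `Γ` and has infinite order.  Then the homomorphism from the Artin
group `A = ⟨x, y ∣ (xy)^5 = (yx)^5⟩` to `Γ` with `x ↦ α`, `y ↦ β` is an isomorphism. -/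
theorem artin_group_of_autoequivalences
    {Γ : Type*} [Group Γ] (α β : Γ)
    (hgen : Subgroup.closure ({α, β} : Set Γ) = ⊤)
    (φ : Γ →* Monoid.Coprod (Multiplicative ℤ) (Multiplicative (ZMod 5)))
    (hsurj : Function.Surjective φ)
    (hα : φ α = Monoid.Coprod.inl (Multiplicative.ofAdd (1 : ℤ)))
    (hαβ : φ (α * β) = Monoid.Coprod.inr (Multiplicative.ofAdd (1 : ZMod 5)))
    (hker : φ.ker = Subgroup.zpowers ((α * β) ^ 5))
    (hcentral : (α * β) ^ 5 ∈ Subgroup.center Γ)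
    (hinf : ¬ IsOfFinOrder ((α * β) ^ 5)) :
    ∀ ψ : PresentedGroup artinRelator →* Γ,
      ψ (PresentedGroup.of 0) = α → ψ (PresentedGroup.of 1) = β →
      Function.Bijective ψ :=
  artin_group_of_autoequivalences_general α β hgen φ hα hαβ hinf
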